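/- Let $k$ be a field, $V$ a finite-dimensional $k$-vector space, $p \geq 1$, and $x \in \mathrm{End}_k(V)$ with $x^p = 0$. Then $V$ is free as a module over $k[u]/(u^p)$ (with $u$ acting by $x$) if and only if $\ker(x) = \mathrm{im}(x^{p-1})$. -/

import Mathlib

/-- Multiplication by `u` on the free module `(k[u]/(u^p))^d`, written in the basis
`u^0, …, u^{p-1}` of each of the `d` copies of `k[u]/(u^p)`: the coordinate shift operator. -/
noncomputable def shiftOp (k : Type*) [Field k] (p d : ℕ) :
    Module.End k (Fin d → Fin p → k) where
  toFun v := fun i j => if h : (j : ℕ) + 1 < p then v i ⟨(j : ℕ) + 1, h⟩ else 0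
  map_add' u v := by funext i j; dsimp; split <;> simp
  map_smul' c v := by funext i j; dsimp; split <;> simp

/-- `V` is free as a module over `k[u]/(u^p)` with `u` acting by the endomorphism `x`:
there is a `k`-linear isomorphism of `V` with `(k[u]/(u^p))^d` carrying `x` to
multiplication by `u`. -/
def IsFreeTruncated {k V : Type*} [Field k] [AddCommGroup V] [Module k V]
    (p : ℕ) (x : Module.End k V) : Prop :=
  ∃ (d : ℕ) (e : V ≃ₗ[k] (Fin d → Fin p → k)), ∀ v : V, e (x v) = shiftOp k p d (e v)

/-!
Write `p = q + 1`. Conjugation by a linear isomorphism preserves `ker x = range (x ^ q)`, and the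
shift satisfies it by inspection, which gives one direction. Conversely, if `ker x = range (x ^ q)`
then for `m ≤ q` the map `x` sends `range (x ^ m)` onto `range (x ^ (m + 1))` with kernel `ker x`,
so `dim V = p · dim (ker x)`. Choosing `vᵢ` with `x ^ q vᵢ` running through a basis of `ker x`, the
map `c ↦ ∑ cᵢⱼ • x ^ (q - j) vᵢ` intertwines the shift with `x`. Its kernel is shift-invariant and
meets `ker shift` trivially, hence vanishes because the shift is nilpotent; by the dimension count
the map is an isomorphism.
-/

open LinearMap Module

section Semiring

variable {R M : Type*} [Semiring R] [AddCommMonoid M] [Module R M]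

theorem range_pow_le_range_pow {x : Module.End R M} {m n : ℕ} (hmn : m ≤ n) :
    range (x ^ n) ≤ range (x ^ m) := by
  rw [← Nat.add_sub_cancel' hmn, pow_add, Module.End.mul_eq_comp]
  exact range_comp_le_range _ _

theorem range_pow_le_ker {x : Module.End R M} {n : ℕ} (hx : x ^ (n + 1) = 0) :
    range (x ^ n) ≤ ker x := by
  rintro _ ⟨c, rfl⟩
  rw [mem_ker, ← Module.End.mul_apply, ← pow_succ', hx, LinearMap.zero_apply]

theorem Submodule.eq_bot_of_disjoint_ker_of_pow_eq_zero {s : Module.End R M} {n : ℕ}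
    (hs : s ^ n = 0) {W : Submodule R M} (hW : W ≤ W.comap s) (h : Disjoint W (ker s)) :
    W = ⊥ := by
  suffices ∀ m, ∀ c ∈ W, (s ^ m) c = 0 → c = 0 from
    (Submodule.eq_bot_iff W).2 fun c hc => this n c hc (by simp [hs])
  intro m
  induction m with
  | zero => simp
  | succ m ih =>
    intro c hc hm
    have hsc : s c = 0 := ih (s c) (hW hc) (by rwa [← Module.End.mul_apply, ← pow_succ])
    exact Submodule.disjoint_def.1 h c hc hsc

end Semiring

section Field

variable {k V W : Type*} [Field k] [AddCommGroup V] [Module k V] [AddCommGroup W] [Module k W]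

theorem ker_eq_range_pow_iff_of_comp_eq (e : V ≃ₗ[k] W) {x : Module.End k V}
    {s : Module.End k W} (h : s ∘ₗ e = e ∘ₗ x) (n : ℕ) :
    ker x = range (x ^ n) ↔ ker s = range (s ^ n) := by
  have hker : ker x = (ker s).comap e.toLinearMap := by
    rw [← ker_comp, h, LinearEquiv.ker_comp]
  have hrange : range (x ^ n) = (range (s ^ n)).comap e.toLinearMap := by
    rw [← range_comp_of_range_eq_top _ e.range, Module.End.commute_pow_left_of_commute h,
      range_comp, Submodule.comap_map_eq_of_injective e.injective]
  rw [hker, hrange]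
  exact (Submodule.comap_injective_of_surjective e.surjective).eq_iff

theorem finrank_range_pow_eq_finrank_range_pow_succ_add [FiniteDimensional k V]
    {x : Module.End k V} {m : ℕ} (hm : ker x ≤ range (x ^ m)) :
    finrank k (range (x ^ m)) = finrank k (range (x ^ (m + 1))) + finrank k (ker x) := by
  have hrange : range (x.domRestrict (range (x ^ m))) = range (x ^ (m + 1)) := by
    rw [range_domRestrict, ← range_comp, pow_succ', Module.End.mul_eq_comp]
  have hker : finrank k (ker (x.domRestrict (range (x ^ m)))) = finrank k (ker x) := by
    rw [ker_domRestrict]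
    exact (Submodule.comapSubtypeEquivOfLe hm).finrank_eq
  rw [← finrank_range_add_finrank_ker (x.domRestrict _), hrange, hker]

theorem finrank_eq_mul_finrank_ker [FiniteDimensional k V] {x : Module.End k V} {q : ℕ}
    (hx : x ^ (q + 1) = 0) (h : ker x = range (x ^ q)) :
    finrank k V = (q + 1) * finrank k (ker x) := by
  suffices ∀ m ≤ q + 1, finrank k V = finrank k (range (x ^ m)) + m * finrank k (ker x) by
    have := this (q + 1) le_rfl
    rwa [hx, range_zero, finrank_bot, zero_add] at this
  intro m
  induction m with
  | zero => rw [pow_zero, Module.End.one_eq_id, range_id, finrank_top]; simp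
  | succ m ih =>
    intro hm
    have hle : ker x ≤ range (x ^ m) := h ▸ range_pow_le_range_pow (by omega)
    rw [ih (by omega), finrank_range_pow_eq_finrank_range_pow_succ_add hle]
    ring

end Field

section ShiftOp

variable {k : Type*} [Field k] {p d : ℕ}

theorem shiftOp_apply (c : Fin d → Fin p → k) (i : Fin d) (j : Fin p) :
    shiftOp k p d c i j = if h : (j : ℕ) + 1 < p then c i ⟨j + 1, h⟩ else 0 := rfl

theorem shiftOp_pow_apply (m : ℕ) (c : Fin d → Fin p → k) (i : Fin d) (j : Fin p) :
    (shiftOp k p d ^ m) c i j = if h : (j : ℕ) + m < p then c i ⟨j + m, h⟩ else 0 := by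
  induction m generalizing j with
  | zero => simp
  | succ m ih =>
    rw [pow_succ', Module.End.mul_apply, shiftOp_apply]
    split_ifs with h₁ h₂ h₂
    · rw [ih]
      simp only [add_right_comm _ 1 m, add_assoc, dif_pos h₂]
    · rw [ih, dif_neg (by simp only; omega)]
    · omega
    · rfl

theorem shiftOp_pow_self : shiftOp k p d ^ p = 0 := by
  ext c i j
  simp [shiftOp_pow_apply]

theorem apply_eq_zero_of_mem_ker_shiftOp {c : Fin d → Fin p → k}
    (hc : c ∈ ker (shiftOp k p d)) (i : Fin d) {j : Fin p} (hj : (j : ℕ) ≠ 0) : c i j = 0 := by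
  have := congrFun (congrFun (mem_ker.1 hc) i) ⟨j - 1, by omega⟩
  rw [shiftOp_apply, dif_pos (by simp only; omega)] at this
  simpa [Nat.sub_add_cancel (Nat.pos_of_ne_zero hj)] using this

theorem ker_shiftOp_eq_range_pow (q : ℕ) :
    ker (shiftOp k (q + 1) d) = range (shiftOp k (q + 1) d ^ q) := by
  refine le_antisymm (fun c hc => ⟨fun i _ => c i 0, ?_⟩) (range_pow_le_ker shiftOp_pow_self)
  funext i j
  rw [shiftOp_pow_apply]
  split_ifs with h
  · congr; ext; simp only [Fin.val_zero]; omega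
  · exact (apply_eq_zero_of_mem_ker_shiftOp hc i (by omega)).symm

end ShiftOp

section ShiftOpLift

variable {k V : Type*} [Field k] [AddCommGroup V] [Module k V] {d : ℕ}

noncomputable def shiftOpLift (x : Module.End k V) (q : ℕ) (v : Fin d → V) :
    (Fin d → Fin (q + 1) → k) →ₗ[k] V :=
  ∑ i, ∑ j : Fin (q + 1),
    (proj (R := k) (φ := fun _ => k) j ∘ₗ proj i).smulRight ((x ^ (q - j)) (v i))

variable {x : Module.End k V} {q : ℕ} {v : Fin d → V}

theorem shiftOpLift_apply (c : Fin d → Fin (q + 1) → k) :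
    shiftOpLift x q v c = ∑ i, ∑ j : Fin (q + 1), c i j • (x ^ (q - j)) (v i) := by
  simp [shiftOpLift]

theorem shiftOpLift_comp_shiftOp (hx : x ^ (q + 1) = 0) :
    shiftOpLift x q v ∘ₗ shiftOp k (q + 1) d = x ∘ₗ shiftOpLift x q v := by
  refine LinearMap.ext fun c => ?_
  simp only [comp_apply, shiftOpLift_apply, map_sum, map_smul]
  refine Finset.sum_congr rfl fun i _ => ?_
  rw [Fin.sum_univ_castSucc, Fin.sum_univ_succ]
  have hlast : shiftOp k (q + 1) d c i (Fin.last q) = 0 := by simp [shiftOp_apply]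
  have hfirst : x ((x ^ q) (v i)) = 0 := by
    rw [← Module.End.mul_apply, ← pow_succ', hx, LinearMap.zero_apply]
  have hmid (j : Fin q) : shiftOp k (q + 1) d c i j.castSucc • (x ^ (q - j)) (v i) =
      c i j.succ • x ((x ^ (q - (j + 1))) (v i)) := by
    rw [shiftOp_apply, dif_pos (by simp), ← Module.End.mul_apply, ← pow_succ',
      Nat.sub_add_eq, Nat.sub_add_cancel (by omega)]
    rfl
  simp [hlast, hfirst, hmid]

theorem shiftOpLift_of_mem_ker {c : Fin d → Fin (q + 1) → k}
    (hc : c ∈ ker (shiftOp k (q + 1) d)) :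
    shiftOpLift x q v c = ∑ i, c i 0 • (x ^ q) (v i) := by
  rw [shiftOpLift_apply]
  refine Finset.sum_congr rfl fun i _ => ?_
  rw [Finset.sum_eq_single 0 (fun j _ hj => ?_) (by simp)]
  · simp
  · rw [apply_eq_zero_of_mem_ker_shiftOp hc i (Fin.val_ne_zero_iff.2 hj), zero_smul]

theorem ker_shiftOpLift (hx : x ^ (q + 1) = 0)
    (hv : LinearIndependent k fun i => (x ^ q) (v i)) : ker (shiftOpLift x q v) = ⊥ := by
  refine Submodule.eq_bot_of_disjoint_ker_of_pow_eq_zero shiftOp_pow_self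
    (fun c hc => ?_) (Submodule.disjoint_def.2 fun c hcΦ hcs => ?_)
  · rw [Submodule.mem_comap, mem_ker, ← comp_apply, shiftOpLift_comp_shiftOp hx, comp_apply,
      mem_ker.1 hc, map_zero]
  · have h0 := Fintype.linearIndependent_iff.1 hv (fun i => c i 0)
      (by rw [← shiftOpLift_of_mem_ker hcs]; exact hcΦ)
    funext i j
    by_cases hj : (j : ℕ) = 0
    · rw [show j = 0 from Fin.ext hj, h0]; rfl
    · exact apply_eq_zero_of_mem_ker_shiftOp hcs i hj

end ShiftOpLift

section

variable {k V : Type*} [Field k] [AddCommGroup V] [Module k V] {x : Module.End k V} {q : ℕ}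

theorem IsFreeTruncated.ker_eq_range_pow (hx : IsFreeTruncated (q + 1) x) :
    ker x = range (x ^ q) := by
  obtain ⟨d, e, he⟩ := hx
  exact (ker_eq_range_pow_iff_of_comp_eq e (LinearMap.ext fun v => (he v).symm) q).2
    (ker_shiftOp_eq_range_pow q)

theorem isFreeTruncated_of_ker_eq_range [FiniteDimensional k V] (hx : x ^ (q + 1) = 0)
    (h : ker x = range (x ^ q)) : IsFreeTruncated (q + 1) x := by
  let b := finBasis k (ker x)
  choose v hv using fun i => (h ▸ (b i).2 : (b i : V) ∈ range (x ^ q))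
  have hinj : ker (shiftOpLift x q v) = ⊥ :=
    ker_shiftOpLift hx (by simp_rw [hv]; exact b.linearIndependent.map' _ (Submodule.ker_subtype _))
  have hdim : finrank k (Fin (finrank k (ker x)) → Fin (q + 1) → k) = finrank k V := by
    rw [finrank_eq_mul_finrank_ker hx h]
    simp [Module.finrank_pi_fintype, mul_comm]
  let e := (shiftOpLift x q v).linearEquivOfInjective (ker_eq_bot.1 hinj) hdim
  refine ⟨_, e.symm, fun w => e.injective ?_⟩
  obtain ⟨c, rfl⟩ := e.surjective w
  rw [e.symm_apply_apply, e.apply_symm_apply]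
  exact (LinearMap.congr_fun (shiftOpLift_comp_shiftOp hx) c).symm

end

theorem isFreeTruncated_iff_ker_eq_range {k V : Type*} [Field k]
    [AddCommGroup V] [Module k V] [FiniteDimensional k V]
    (p : ℕ) (hp : 1 ≤ p) (x : Module.End k V) (hx : x ^ p = 0) :
    IsFreeTruncated p x ↔ LinearMap.ker x = LinearMap.range (x ^ (p - 1)) := by
  obtain ⟨q, rfl⟩ : ∃ q, p = q + 1 := ⟨p - 1, by omega⟩
  rw [Nat.add_sub_cancel]
  exact ⟨IsFreeTruncated.ker_eq_range_pow, isFreeTruncated_of_ker_eq_range hx⟩
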